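/- Let p and q be coprime integers with 1 ≤ p < q and set ω = 2πp/q. Let b : ℝ → ℝ be a smooth 2π-periodic function. Then there exists a smooth 2π-periodic function ã : ℝ → ℝ with (t + ω + ã(t+ω)) − (t + ã(t)) = b(t) for all t ∈ ℝ (i.e. δ applied to the function t ↦ t + ã(t) equals b) if and only if μ{b}(t) = ω for all t ∈ ℝ; and when this holds, the solution ã is unique among smooth 2π-periodic functions satisfying additionally μ{ã}(t) = 0 for all t. -/

import Mathlib

open Real

/-- The average operator `μ{a}(t) = (1/q)·∑_{j=0}^{q−1} a(t + jω)`. -/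
noncomputable def avgOp (q : ℕ) (ω : ℝ) (a : ℝ → ℝ) : ℝ → ℝ :=
  fun t => (1 / (q : ℝ)) * ∑ j ∈ Finset.range q, a (t + j * ω)

private lemma per_nat' (a : ℝ → ℝ) (ha : ∀ t, a (t + 2*π) = a t) (n : ℕ) (t : ℝ) :
    a (t + n * (2*π)) = a t := by
  induction n with
  | zero => simp
  | succ n ih =>
      have h1 : ((n+1:ℕ):ℝ) = (n:ℝ) + 1 := by push_cast; ring
      have h2 : t + ((n:ℝ)+1) * (2*π) = (t + n*(2*π)) + 2*π := by ring
      rw [h1, h2, ha, ih]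

private lemma shift_iter' (ω : ℝ) (g : ℝ → ℝ) (hg : ∀ s, g (s + ω) = g s) (j : ℕ) (t : ℝ) :
    g (t + j * ω) = g t := by
  induction j with
  | zero => simp
  | succ j ih =>
      have h1 : ((j+1:ℕ):ℝ) = (j:ℝ) + 1 := by push_cast; ring
      have h2 : t + ((j:ℝ)+1) * ω = (t + j*ω) + ω := by ring
      rw [h1, h2, hg, ih]

private lemma avg_invariant' (q : ℕ) (hq : 0 < q) (ω : ℝ) (g : ℝ → ℝ)
    (hg : ∀ s, g (s + ω) = g s) (t : ℝ) : avgOp q ω g t = g t := by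
  have hqR : (q:ℝ) ≠ 0 := Nat.cast_ne_zero.mpr hq.ne'
  simp only [avgOp]
  rw [Finset.sum_congr rfl (fun j _ => shift_iter' ω g hg j t), Finset.sum_const,
    Finset.card_range, nsmul_eq_mul]
  field_simp

private lemma sum_shift' (q : ℕ) (ω t : ℝ) (a : ℝ → ℝ) (hsh : a (t + q * ω) = a t) :
    ∑ j ∈ Finset.range q, a (t + ω + j * ω) = ∑ j ∈ Finset.range q, a (t + j * ω) := by
  have h1 : ∀ j : ℕ, a (t + ω + (j:ℝ) * ω)
      = (a (t + ((j+1:ℕ):ℝ) * ω) - a (t + (j:ℝ) * ω)) + a (t + (j:ℝ) * ω) := by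
    intro j
    have harg : t + ω + (j:ℝ) * ω = t + ((j+1:ℕ):ℝ) * ω := by push_cast; ring
    rw [harg]; ring
  rw [Finset.sum_congr rfl (fun j _ => h1 j), Finset.sum_add_distrib,
    Finset.sum_range_sub (fun j : ℕ => a (t + (j:ℝ) * ω))]
  simp [hsh]

theorem stmt_3 (p q : ℕ) (hco : Nat.Coprime p q) (hp : 1 ≤ p) (hpq : p < q)
    (ω : ℝ) (hω : ω = 2 * π * p / q)
    (b : ℝ → ℝ) (hb : ContDiff ℝ (⊤ : ℕ∞) b) (hbper : ∀ t, b (t + 2 * π) = b t) :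
    ((∃ ta : ℝ → ℝ, ContDiff ℝ (⊤ : ℕ∞) ta ∧ (∀ t, ta (t + 2 * π) = ta t) ∧
        (∀ t, (t + ω + ta (t + ω)) - (t + ta t) = b t))
      ↔ (∀ t, avgOp q ω b t = ω)) ∧
    ((∀ t, avgOp q ω b t = ω) →
      ∃! ta : ℝ → ℝ, ContDiff ℝ (⊤ : ℕ∞) ta ∧ (∀ t, ta (t + 2 * π) = ta t) ∧
        (∀ t, (t + ω + ta (t + ω)) - (t + ta t) = b t) ∧ (∀ t, avgOp q ω ta t = 0)) := by
  have hqpos : 0 < q := lt_of_le_of_lt (Nat.zero_le p) hpq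
  have hqR : (q:ℝ) ≠ 0 := Nat.cast_ne_zero.mpr hqpos.ne'
  have hqω : (q:ℝ) * ω = (p:ℝ) * (2*π) := by rw [hω]; field_simp
  have hshiftq : ∀ (a : ℝ → ℝ), (∀ s, a (s + 2*π) = a s) → ∀ t, a (t + (q:ℝ) * ω) = a t := by
    intro a ha t
    rw [show t + (q:ℝ) * ω = t + (p:ℝ) * (2*π) by rw [hqω]]
    exact per_nat' a ha p t
  -- forward direction: existence of solution implies average condition
  have hfwd : (∃ ta : ℝ → ℝ, ContDiff ℝ (⊤ : ℕ∞) ta ∧ (∀ t, ta (t + 2 * π) = ta t) ∧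
        (∀ t, (t + ω + ta (t + ω)) - (t + ta t) = b t)) → (∀ t, avgOp q ω b t = ω) := by
    rintro ⟨ta, _, hper, hδ⟩ t
    have key : ∀ j : ℕ, b (t + (j:ℝ) * ω)
        = (ta (t + ((j+1:ℕ):ℝ) * ω) - ta (t + (j:ℝ) * ω)) + ω := by
      intro j
      have h1 := hδ (t + (j:ℝ) * ω)
      have harg : t + (j:ℝ) * ω + ω = t + ((j+1:ℕ):ℝ) * ω := by push_cast; ring
      rw [harg] at h1
      linarith
    simp only [avgOp]
    rw [Finset.sum_congr rfl (fun j _ => key j), Finset.sum_add_distrib,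
      Finset.sum_range_sub (fun j : ℕ => ta (t + (j:ℝ) * ω)), Finset.sum_const,
      Finset.card_range, nsmul_eq_mul]
    rw [hshiftq ta hper t]
    simp only [Nat.cast_zero, zero_mul, add_zero, sub_self, zero_add]
    field_simp
  -- construction: average condition implies existence of normalized solution
  have hmain : (∀ t, avgOp q ω b t = ω) →
      ∃ ta : ℝ → ℝ, ContDiff ℝ (⊤ : ℕ∞) ta ∧ (∀ t, ta (t + 2 * π) = ta t) ∧
        (∀ t, (t + ω + ta (t + ω)) - (t + ta t) = b t) ∧ (∀ t, avgOp q ω ta t = 0) := by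
    intro havg
    set c : ℝ → ℝ := fun s => b s - ω with hc
    have hcper : ∀ s, c (s + 2*π) = c s := fun s => by simp [hc, hbper s]
    have hsum : ∀ s, ∑ j ∈ Finset.range q, c (s + (j:ℝ) * ω) = 0 := by
      intro s
      have h1 := havg s
      simp only [avgOp] at h1
      have h2 : ∑ j ∈ Finset.range q, b (s + (j:ℝ) * ω) = (q:ℝ) * ω := by
        field_simp at h1; linarith
      simp only [hc]
      rw [Finset.sum_sub_distrib, h2, Finset.sum_const, Finset.card_range, nsmul_eq_mul]
      ring
    set ta0 : ℝ → ℝ := fun s => (1/(q:ℝ)) * ∑ j ∈ Finset.range q, (j:ℝ) * c (s + (j:ℝ) * ω)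
      with hta0
    have hta0s : ContDiff ℝ (⊤ : ℕ∞) ta0 := by
      apply contDiff_const.mul
      apply ContDiff.sum
      intro j _
      exact contDiff_const.mul ((hb.comp (contDiff_id.add contDiff_const)).sub contDiff_const)
    have hta0per : ∀ s, ta0 (s + 2*π) = ta0 s := by
      intro s
      simp only [hta0]
      congr 1
      refine Finset.sum_congr rfl fun j _ => ?_
      congr 1
      rw [show s + 2*π + (j:ℝ)*ω = (s + (j:ℝ)*ω) + 2*π by ring, hcper]
    have hδ0 : ∀ t, ta0 (t + ω) - ta0 t = c t := by
      intro t
      have key : ∑ j ∈ Finset.range q, ((j:ℝ) * c (t + ω + (j:ℝ) * ω) - (j:ℝ) * c (t + (j:ℝ) * ω))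
          = ∑ j ∈ Finset.range q,
            (((((j+1:ℕ)):ℝ) * c (t + ((j+1:ℕ):ℝ) * ω) - (j:ℝ) * c (t + (j:ℝ) * ω))
              - c (t + ω + (j:ℝ) * ω)) := by
        refine Finset.sum_congr rfl fun j _ => ?_
        have harg : t + ω + (j:ℝ) * ω = t + ((j+1:ℕ):ℝ) * ω := by push_cast; ring
        rw [harg]; push_cast; ring
      have hsum2 : ∑ j ∈ Finset.range q, c (t + ω + (j:ℝ) * ω) = 0 := hsum (t + ω)
      have htel : ∑ j ∈ Finset.range q,
          ((((j+1:ℕ)):ℝ) * c (t + ((j+1:ℕ):ℝ) * ω) - (j:ℝ) * c (t + (j:ℝ) * ω))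
          = (q:ℝ) * c t := by
        rw [Finset.sum_range_sub (fun j : ℕ => (j:ℝ) * c (t + (j:ℝ) * ω))]
        rw [hshiftq c hcper t]
        simp
      have hfinal : ∑ j ∈ Finset.range q, (j:ℝ) * c (t + ω + (j:ℝ) * ω)
          - ∑ j ∈ Finset.range q, (j:ℝ) * c (t + (j:ℝ) * ω) = (q:ℝ) * c t := by
        rw [← Finset.sum_sub_distrib, key, Finset.sum_sub_distrib, htel, hsum2]
        ring
      simp only [hta0]
      rw [← mul_sub, hfinal]
      field_simp
    set A : ℝ → ℝ := fun s => avgOp q ω ta0 s with hA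
    have hAs : ContDiff ℝ (⊤ : ℕ∞) A := by
      simp only [hA, avgOp]
      apply contDiff_const.mul
      apply ContDiff.sum
      intro j _
      exact hta0s.comp (contDiff_id.add contDiff_const)
    have hAper : ∀ s, A (s + 2*π) = A s := by
      intro s
      simp only [hA, avgOp]
      congr 1
      refine Finset.sum_congr rfl fun j _ => ?_
      rw [show s + 2*π + (j:ℝ)*ω = (s + (j:ℝ)*ω) + 2*π by ring, hta0per]
    have hAinv : ∀ s, A (s + ω) = A s := by
      intro s
      simp only [hA, avgOp]
      congr 1
      exact sum_shift' q ω s ta0 (hshiftq ta0 hta0per s)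
    refine ⟨fun s => ta0 s - A s, hta0s.sub hAs, ?_, ?_, ?_⟩
    · intro t
      show ta0 (t + 2*π) - A (t + 2*π) = ta0 t - A t
      rw [hta0per, hAper]
    · intro t
      have h1 := hδ0 t
      have h2 := hAinv t
      simp only [hc] at h1
      show t + ω + (ta0 (t + ω) - A (t + ω)) - (t + (ta0 t - A t)) = b t
      linarith
    · intro t
      have havgsub : avgOp q ω (fun s => ta0 s - A s) t = avgOp q ω ta0 t - avgOp q ω A t := by
        simp [avgOp, Finset.sum_sub_distrib, mul_sub]
      rw [havgsub, avg_invariant' q hqpos ω A hAinv t]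
      simp [hA]
  constructor
  · exact ⟨hfwd, fun havg => by
      obtain ⟨ta, h1, h2, h3, _⟩ := hmain havg
      exact ⟨ta, h1, h2, h3⟩⟩
  · intro havg
    obtain ⟨ta, h1, h2, h3, h4⟩ := hmain havg
    refine ⟨ta, ⟨h1, h2, h3, h4⟩, ?_⟩
    rintro y ⟨hy1, hy2, hy3, hy4⟩
    funext t
    have hdinv : ∀ s, (fun s => y s - ta s) (s + ω) = (fun s => y s - ta s) s := by
      intro s
      have ha := hy3 s
      have hb' := h3 s
      simp only
      linarith
    have hinv := avg_invariant' q hqpos ω (fun s => y s - ta s) hdinv t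
    have havgsub : avgOp q ω (fun s => y s - ta s) t = avgOp q ω y t - avgOp q ω ta t := by
      simp [avgOp, Finset.sum_sub_distrib, mul_sub]
    rw [havgsub, hy4 t, h4 t] at hinv
    simp only [sub_zero, zero_sub] at hinv
    linarith
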